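/- arXiv:2308.03534 — 2 statements merged into one kernel-verified Lean document; each statement's English description precedes it below -/
import Mathlib

section
/- Let p = 11 and f = X⁷ + X⁵ + 7X³ + X in 𝔽₁₁[X], and let c_k denote the coefficient of X^k in f⁵. Then c_{11i−j} = 0 for all 1 ≤ i ≤ j ≤ 3 (i.e. c₁₀ = c₉ = c₈ = c₂₀ = c₁₉ = c₃₀ = 0), and c₂₁ ≠ 0 and c₃₁ ≠ 0, so the Cartier–Manin matrix of the curve y² = f(x) is strictly lower triangular of rank 2. -/
open Polynomial

lemma f5_expand :
    ((X ^ 7 + X ^ 5 + 7 * X ^ 3 + X : (ZMod 11)[X]) ^ 5) =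
      X ^ 5 + 35 * X ^ 7 + 495 * X ^ 9 + 3575 * X ^ 11 + 13625 * X ^ 13 +
      25367 * X ^ 15 + 20775 * X ^ 17 + 18755 * X ^ 19 + 9275 * X ^ 21 +
      5385 * X ^ 23 + 1781 * X ^ 25 + 725 * X ^ 27 + 155 * X ^ 29 +
      45 * X ^ 31 + 5 * X ^ 33 + X ^ 35 := by
  ring

/-- For `p = 11` and `f = X⁷ + X⁵ + 7X³ + X` over `𝔽₁₁`, the coefficients
`c k` of `f⁵` satisfy `c (11i − j) = 0` for `1 ≤ i ≤ j ≤ 3`, while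
`c 21 ≠ 0` and `c 31 ≠ 0`: the Cartier–Manin matrix of `y² = f(x)` is
strictly lower triangular of rank `2`. -/
theorem cartier_manin_p11 :
    (∀ i j : ℕ, 1 ≤ i → i ≤ j → j ≤ 3 →
      ((X ^ 7 + X ^ 5 + 7 * X ^ 3 + X : (ZMod 11)[X]) ^ 5).coeff (11 * i - j) = 0) ∧
    ((X ^ 7 + X ^ 5 + 7 * X ^ 3 + X : (ZMod 11)[X]) ^ 5).coeff 21 ≠ 0 ∧
    ((X ^ 7 + X ^ 5 + 7 * X ^ 3 + X : (ZMod 11)[X]) ^ 5).coeff 31 ≠ 0 := by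
  rw [f5_expand]
  refine ⟨?_, ?_, ?_⟩
  · intro i j hi hij hj
    interval_cases j <;> interval_cases i <;>
      simp [coeff_X_pow] <;> decide
  · simp [coeff_X_pow]
    decide
  · simp [coeff_X_pow]
    decide
end

section
/- Let p be a prime and k an algebraically closed field of characteristic p, and let σ denote the Frobenius ring endomorphism of the ring of Witt vectors W(k) (which is bijective since k is perfect). Then for every unit w ∈ W(k)ˣ there exists a unit v ∈ W(k)ˣ such that σ⁶(v) = w·v. Equivalently, for every unit u ∈ W(k)ˣ there exists a unit ũ ∈ W(k)ˣ with σ⁻⁶(ũ)·u = ũ. -/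
/-!
The solution `v` of `σᵐ v = w v` (for any `m ≠ 0`) is built coefficient by coefficient, since
`σ` raises every Witt coordinate to the `p`-th power. In coordinate `0` the equation reads
`v₀ ^ pᵐ = w₀ v₀`, solved by a nonzero `(pᵐ - 1)`-th root of `w₀`. In coordinate `n + 1` it reads
`vₙ₊₁ ^ pᵐ = w₀ ^ pⁿ⁺¹ vₙ₊₁ + c`, where `c` only involves `v₀, …, vₙ`: a polynomial equation of
degree `pᵐ > 1` in `vₙ₊₁`, which has a root because `k` is algebraically closed. Units of `W(k)`
are exactly the Witt vectors with nonzero zeroth coordinate.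
-/

open Polynomial

namespace IsAlgClosed

variable {K : Type*} [Field K] [IsAlgClosed K]

theorem exists_pow_eq_mul_add {d : ℕ} (hd : 1 < d) (a b : K) : ∃ x : K, x ^ d = a * x + b := by
  have hdeg : (X ^ d - (C a * X + C b) : K[X]).degree = d := by
    rw [degree_sub_eq_left_of_degree_lt] <;> rw [degree_X_pow]
    exact degree_linear_le.trans_lt (mod_cast hd)
  obtain ⟨x, hx⟩ := exists_root _ (by rw [hdeg]; exact_mod_cast (by omega : d ≠ 0))
  exact ⟨x, by simpa [sub_eq_zero] using hx⟩

theorem exists_ne_zero_pow_eq_mul {d : ℕ} (hd : 1 < d) {a : K} (ha : a ≠ 0) :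
    ∃ x : K, x ≠ 0 ∧ x ^ d = a * x := by
  obtain ⟨x, hx⟩ := exists_pow_nat_eq a (Nat.sub_pos_of_lt hd)
  refine ⟨x, ?_, ?_⟩
  · rintro rfl
    exact ha (by rw [← hx, zero_pow (by omega)])
  · rw [← hx, ← pow_succ, Nat.sub_add_cancel hd.le]

end IsAlgClosed

namespace WittVector

variable (p : ℕ) [hp : Fact p.Prime] {k : Type*}

local notation "𝕎" => WittVector p

theorem coeff_iterate_frobenius [CommRing k] [CharP k p] (m : ℕ) (x : 𝕎 k) (n : ℕ) :
    (frobenius^[m] x).coeff n = x.coeff n ^ p ^ m := by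
  induction m generalizing x with
  | zero => simp
  | succ m ih =>
    rw [Function.iterate_succ_apply, ih, coeff_frobenius_charP, ← pow_mul, ← pow_succ']

variable [Field k] [CharP k p] [IsAlgClosed k] {m : ℕ}

noncomputable def iterateFrobeniusRotationCoeff (hm : m ≠ 0) {w : 𝕎 k} (hw : w.coeff 0 ≠ 0) :
    ℕ → k
  | 0 => (IsAlgClosed.exists_ne_zero_pow_eq_mul (Nat.one_lt_pow hm hp.out.one_lt) hw).choose
  | n + 1 => (IsAlgClosed.exists_pow_eq_mul_add (Nat.one_lt_pow hm hp.out.one_lt)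
      (w.coeff 0 ^ p ^ (n + 1))
      (w.coeff (n + 1) * iterateFrobeniusRotationCoeff hm hw 0 ^ p ^ (n + 1) +
        nthRemainder p n (truncateFun (n + 1) w)
          fun i : Fin (n + 1) => iterateFrobeniusRotationCoeff hm hw i.val)).choose

theorem iterateFrobeniusRotationCoeff_zero_ne_zero (hm : m ≠ 0) {w : 𝕎 k}
    (hw : w.coeff 0 ≠ 0) : iterateFrobeniusRotationCoeff p hm hw 0 ≠ 0 := by
  rw [iterateFrobeniusRotationCoeff]
  exact (IsAlgClosed.exists_ne_zero_pow_eq_mul (Nat.one_lt_pow hm hp.out.one_lt) hw).choose_spec.1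

theorem iterateFrobeniusRotationCoeff_zero_pow (hm : m ≠ 0) {w : 𝕎 k} (hw : w.coeff 0 ≠ 0) :
    iterateFrobeniusRotationCoeff p hm hw 0 ^ p ^ m =
      w.coeff 0 * iterateFrobeniusRotationCoeff p hm hw 0 := by
  rw [iterateFrobeniusRotationCoeff]
  exact (IsAlgClosed.exists_ne_zero_pow_eq_mul (Nat.one_lt_pow hm hp.out.one_lt) hw).choose_spec.2

theorem iterateFrobeniusRotationCoeff_succ_pow (hm : m ≠ 0) {w : 𝕎 k} (hw : w.coeff 0 ≠ 0)
    (n : ℕ) :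
    iterateFrobeniusRotationCoeff p hm hw (n + 1) ^ p ^ m =
      w.coeff 0 ^ p ^ (n + 1) * iterateFrobeniusRotationCoeff p hm hw (n + 1) +
        (w.coeff (n + 1) * iterateFrobeniusRotationCoeff p hm hw 0 ^ p ^ (n + 1) +
          nthRemainder p n (truncateFun (n + 1) w)
            fun i : Fin (n + 1) => iterateFrobeniusRotationCoeff p hm hw i.val) := by
  rw [iterateFrobeniusRotationCoeff.eq_2]
  exact (IsAlgClosed.exists_pow_eq_mul_add (Nat.one_lt_pow hm hp.out.one_lt) _ _).choose_spec

noncomputable def iterateFrobeniusRotation (hm : m ≠ 0) {w : 𝕎 k} (hw : w.coeff 0 ≠ 0) : 𝕎 k :=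
  mk p (iterateFrobeniusRotationCoeff p hm hw)

theorem iterate_frobenius_iterateFrobeniusRotation (hm : m ≠ 0) {w : 𝕎 k} (hw : w.coeff 0 ≠ 0) :
    frobenius^[m] (iterateFrobeniusRotation p hm hw) = w * iterateFrobeniusRotation p hm hw := by
  ext n
  rw [coeff_iterate_frobenius]
  rcases n with - | n
  · rw [mul_coeff_zero]
    exact iterateFrobeniusRotationCoeff_zero_pow p hm hw
  · have htrunc : truncateFun (n + 1) (iterateFrobeniusRotation p hm hw) =
        fun i : Fin (n + 1) => iterateFrobeniusRotationCoeff p hm hw i := rfl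
    rw [nthRemainder_spec, htrunc, iterateFrobeniusRotation, coeff_mk,
      iterateFrobeniusRotationCoeff_succ_pow]
    ring

theorem exists_unit_iterate_frobenius_eq_mul (hm : m ≠ 0) (w : (𝕎 k)ˣ) :
    ∃ v : (𝕎 k)ˣ, frobenius^[m] (v : 𝕎 k) = w * v := by
  have hw : (w : 𝕎 k).coeff 0 ≠ 0 := (w.isUnit.map constantCoeff).ne_zero
  obtain ⟨v, hv⟩ := isUnit_of_coeff_zero_ne_zero (iterateFrobeniusRotation p hm hw)
    (iterateFrobeniusRotationCoeff_zero_ne_zero p hm hw)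
  exact ⟨v, hv ▸ iterate_frobenius_iterateFrobeniusRotation p hm hw⟩

end WittVector

/-- Let `k` be an algebraically closed field of characteristic `p` and let
`σ` be the Frobenius endomorphism of the Witt vectors `W(k)`.  Then for every
unit `w ∈ W(k)ˣ` there is a unit `v ∈ W(k)ˣ` with `σ⁶(v) = w·v`. -/
theorem witt_frobenius_six_lang (p : ℕ) [Fact p.Prime] (k : Type*) [Field k]
    [IsAlgClosed k] [CharP k p] (w : (WittVector p k)ˣ) :
    ∃ v : (WittVector p k)ˣ,
      (⇑(WittVector.frobenius : WittVector p k →+* WittVector p k))^[6] (v : WittVector p k) =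
        (w : WittVector p k) * (v : WittVector p k) :=
  WittVector.exists_unit_iterate_frobenius_eq_mul p (by norm_num) w
end
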